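/- arXiv:2305.04479 — 2 statements merged into one kernel-verified Lean document; each statement's English description precedes it below -/
import Mathlib

section
/- In a bowless directed mixed graph (BDMG), every inseparable pair of non-adjacent nodes is connected by a primitive inducing path (PIP). -/
open MeasureTheory ProbabilityTheory

namespace CausalAxioms

/-! ### Mixed graphs (arrows and arcs) -/

structure MixedGraph (V : Type) where
  arrow : V → V → Prop
  arc : V → V → Prop

namespace MixedGraph

variable {V : Type} (G : MixedGraph V)

/-- Two nodes are adjacent if they are joined by an arrow (in either direction) or an arc. -/
def Adj (i j : V) : Prop :=
  G.arrow i j ∨ G.arrow j i ∨ G.arc i j ∨ G.arc j i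

/-- A bowless directed mixed graph: arcs are symmetric, there are no self-loops, and no pair of
nodes is joined by both an arrow and an arc (no bows). -/
def IsBDMG : Prop :=
  (∀ i j, G.arc i j → G.arc j i) ∧ (∀ i, ¬ G.arc i i) ∧ (∀ i, ¬ G.arrow i i) ∧
    ∀ i j, G.arc i j → ¬ G.arrow i j ∧ ¬ G.arrow j i

/-- The set of ancestors of `j`: nodes with a directed path to `j` (excluding `j` itself). -/
def anc (j : V) : Set V := {i | i ≠ j ∧ Relation.TransGen G.arrow i j}

/-- Ancestors of a set `A`: `an(A) = (⋃ j ∈ A, an(j)) \ A`. -/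
def ancSet (A : Set V) : Set V := (⋃ j ∈ A, G.anc j) \ A

/-- The strongly connected component of `i`. -/
def sc (i : V) : Set V :=
  {j | j = i ∨ (Relation.TransGen G.arrow i j ∧ Relation.TransGen G.arrow j i)}

/-- Parents of `i`. -/
def pa (i : V) : Set V := {j | G.arrow j i}

/-- `pa({i,j}) = (pa(i) ∪ pa(j)) \ {i,j}`. -/
def paPair (i j : V) : Set V := (G.pa i ∪ G.pa j) \ {i, j}

/-- No directed cycles. -/
def Acyclic : Prop := ∀ i, ¬ Relation.TransGen G.arrow i i

/-- A directed ancestral graph: a BDMG with no directed cycles and no arc `i ↔ j`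
with `i ∈ an(j)`. -/
def DirectedAncestral : Prop :=
  G.IsBDMG ∧ G.Acyclic ∧ ∀ i j, G.arc i j → i ∉ G.anc j

/-- The acyclification of a directed mixed graph. -/
def acy : MixedGraph V where
  arrow j i := (∃ k ∈ G.sc i, G.arrow j k) ∧ j ∉ G.sc i
  arc i j := i ≠ j ∧ ∃ i' ∈ G.sc i, ∃ j' ∈ G.sc j, i' = j' ∨ G.arc i' j'

end MixedGraph

/-- A direction/type for an edge along a path: a forward arrow, a backward arrow, or an arc. -/
inductive EDir : Type
  | fwd | bwd | biarc

/-- `G.IsEdgeDir d a b` : the graph has an edge of type `d` between `a` and `b`. -/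
def MixedGraph.IsEdgeDir {V : Type} (G : MixedGraph V) : EDir → V → V → Prop
  | .fwd, a, b => G.arrow a b
  | .bwd, a, b => G.arrow b a
  | .biarc, a, b => G.arc a b ∨ G.arc b a

/-- A path in a mixed graph, recorded by its node sequence `v 0, …, v n` and the type of
each edge; all nodes are distinct. -/
structure PathIn {V : Type} (G : MixedGraph V) where
  n : ℕ
  v : ℕ → V
  e : ℕ → EDir
  one_le : 1 ≤ n
  edge : ∀ r, r < n → G.IsEdgeDir (e r) (v r) (v (r + 1))
  inj : ∀ r, r ≤ n → ∀ s, s ≤ n → v r = v s → r = s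

namespace PathIn

variable {V : Type} {G : MixedGraph V} (p : PathIn G)

/-- Edge `r` has an arrowhead at its right endpoint `v (r+1)`. -/
def headRight (r : ℕ) : Prop := p.e r = EDir.fwd ∨ p.e r = EDir.biarc

/-- Edge `r` has an arrowhead at its left endpoint `v r`. -/
def headLeft (r : ℕ) : Prop := p.e r = EDir.bwd ∨ p.e r = EDir.biarc

/-- The inner node `v r` (for `1 ≤ r ≤ n-1`) is a collider. -/
def Collider (r : ℕ) : Prop := p.headRight (r - 1) ∧ p.headLeft r

/-- The path is σ-connecting given `C`. -/
def SigmaConnecting (C : Set V) : Prop :=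
  ∀ r, 1 ≤ r → r < p.n →
    (p.Collider r → p.v r ∈ C ∪ G.ancSet C) ∧
    (¬ p.Collider r →
      p.v r ∉ C ∨
        ((p.headLeft (r - 1) → p.v (r - 1) ∈ G.sc (p.v r)) ∧
          (p.headRight r → p.v (r + 1) ∈ G.sc (p.v r))))

/-- The path is m-connecting given `C`. -/
def MConnecting (C : Set V) : Prop :=
  ∀ r, 1 ≤ r → r < p.n →
    (p.Collider r → p.v r ∈ C ∪ G.ancSet C) ∧ (¬ p.Collider r → p.v r ∉ C)

end PathIn

/-- σ-separation of `A` and `B` given `C`. -/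
def SigmaSep {V : Type} (G : MixedGraph V) (A B C : Set V) : Prop :=
  ¬ ∃ p : PathIn G, p.v 0 ∈ A ∧ p.v p.n ∈ B ∧ p.SigmaConnecting C

/-- m-separation of `A` and `B` given `C`. -/
def MSep {V : Type} (G : MixedGraph V) (A B C : Set V) : Prop :=
  ¬ ∃ p : PathIn G, p.v 0 ∈ A ∧ p.v p.n ∈ B ∧ p.MConnecting C

/-- A separable pair: a non-adjacent pair that can be σ-separated by some set. -/
def SeparablePair {V : Type} (G : MixedGraph V) (i j : V) : Prop :=
  ¬ G.Adj i j ∧ ∃ C : Set V, i ∉ C ∧ j ∉ C ∧ SigmaSep G {i} {j} C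

/-- A separable pair in the m-separation sense. -/
def MSeparablePair {V : Type} (G : MixedGraph V) (i j : V) : Prop :=
  ¬ G.Adj i j ∧ ∃ C : Set V, i ∉ C ∧ j ∉ C ∧ MSep G {i} {j} C

/-- A graph is maximal if every non-adjacent pair is separable. -/
def MaximalGraph {V : Type} (G : MixedGraph V) : Prop :=
  ∀ i j, i ≠ j → ¬ G.Adj i j → SeparablePair G i j

/-- Two graphs are Markov equivalent if they induce the same σ-separations. -/
def MarkovEquiv {V : Type} (G₁ G₂ : MixedGraph V) : Prop :=
  ∀ A B C : Set V, SigmaSep G₁ A B C ↔ SigmaSep G₂ A B C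

/-- A primitive inducing path (PIP): a path with at least 3 nodes, all of whose edges are arcs or
arrows within a strongly connected component (except that the first edge may be `i → q₁` and the
last may be `q_r ← j`), and all of whose inner nodes are ancestors of one of the endpoints. -/
def IsPIP {V : Type} (G : MixedGraph V) (p : PathIn G) : Prop :=
  2 ≤ p.n ∧
    (∀ r, r < p.n →
      p.e r = EDir.biarc ∨ p.v r ∈ G.sc (p.v (r + 1)) ∨
        (r = 0 ∧ p.e r = EDir.fwd) ∨ (r + 1 = p.n ∧ p.e r = EDir.bwd)) ∧
    ∀ r, 1 ≤ r → r < p.n → p.v r ∈ G.ancSet {p.v 0, p.v p.n}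

/-! ### Conditional independence for coordinates of a product space -/

variable {V : Type} {X : V → Type} [∀ i, MeasurableSpace (X i)]

/-- The σ-algebra on `∀ i, X i` generated by the coordinates in `A`. -/
def coordσ (X : V → Type) [∀ i, MeasurableSpace (X i)] (A : Set V) :
    MeasurableSpace (∀ i, X i) :=
  MeasurableSpace.comap (A.restrict) MeasurableSpace.pi

/-- `CI P A B C` : the coordinates in `A` are conditionally independent of the coordinates in
`B` given the coordinates in `C`, under the measure `P`. -/
def CI (P : Measure (∀ i, X i)) (A B C : Set V) : Prop :=
  ∀ s t : Set (∀ i, X i),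
    MeasurableSet[coordσ X A] s → MeasurableSet[coordσ X B] t →
      (P⟦s ∩ t | coordσ X C⟧) =ᵐ[P] (P⟦s | coordσ X C⟧) * (P⟦t | coordσ X C⟧)

/-- The intersection property. -/
def IntersectionProp (P : Measure (∀ i, X i)) : Prop :=
  ∀ A B C D : Set V, Disjoint A B → Disjoint A C → Disjoint A D → Disjoint B C →
    Disjoint B D → Disjoint C D →
    CI P A B (C ∪ D) → CI P A D (C ∪ B) → CI P A (B ∪ D) C

/-- The composition property. -/
def CompositionProp (P : Measure (∀ i, X i)) : Prop :=
  ∀ A B C D : Set V, Disjoint A B → Disjoint A C → Disjoint A D → Disjoint B C →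
    Disjoint B D → Disjoint C D →
    CI P A B C → CI P A D C → CI P A (B ∪ D) C

/-- Singleton-transitivity. -/
def SingletonTransProp (P : Measure (∀ i, X i)) : Prop :=
  ∀ i j k : V, ∀ C : Set V, i ≠ j → i ≠ k → j ≠ k → i ∉ C → j ∉ C → k ∉ C →
    CI P {i} {j} C → CI P {i} {j} (C ∪ {k}) →
      CI P {i} {k} C ∨ CI P {j} {k} C

/-- The global Markov property with respect to σ-separation. -/
def GlobalMarkovSigma (G : MixedGraph V) (P : Measure (∀ i, X i)) : Prop :=
  ∀ A B C : Set V, Disjoint A B → Disjoint A C → Disjoint B C →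
    SigmaSep G A B C → CI P A B C

/-- The pairwise Markov property: `i ⊥ j | an({i,j})` for every non-adjacent pair. -/
def PairwiseMarkov (G : MixedGraph V) (P : Measure (∀ i, X i)) : Prop :=
  ∀ i j : V, i ≠ j → ¬ G.Adj i j → CI P {i} {j} (G.ancSet {i, j})

/-- The converse pairwise Markov property: every edge yields a conditional dependence. -/
def ConversePairwiseMarkov (G : MixedGraph V) (P : Measure (∀ i, X i)) : Prop :=
  ∀ i j : V, i ≠ j → G.Adj i j → ¬ CI P {i} {j} (G.ancSet {i, j})

/-! ### Interventional families -/

variable (Pdo : V → Measure (∀ i, X i))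

/-- The set of causes of `k`. -/
def cause (k : V) : Set V := {i | i ≠ k ∧ ¬ CI (Pdo i) {i} {k} ∅}

/-- The set of effects of `i`. -/
def effect (i : V) : Set V := {k | k ≠ i ∧ i ∈ cause Pdo k}

/-- `cause(A) = (⋃ k ∈ A, cause(k)) \ A`. -/
def causeSet (A : Set V) : Set V := (⋃ k ∈ A, cause Pdo k) \ A

/-- The causal cycle containing `i`. -/
def cc (i : V) : Set V := {k | k = i ∨ (k ∈ cause Pdo i ∧ i ∈ cause Pdo k)}

/-- A transitive interventional family. -/
def TransitiveFam : Prop :=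
  ∀ i j k : V, i ≠ j → j ≠ k → i ≠ k →
    i ∈ cause Pdo j → j ∈ cause Pdo k → i ∈ cause Pdo k

/-- Given a candidate direct-cause assignment `dc`, the `i`-intervened causes of `k`:
the ancestors of `k` in the graph with arrows `a → b` iff `a ∈ dc b`, with all arrows
pointing to `i` removed. -/
def iotaFrom (dc : V → Set V) (i k : V) : Set V :=
  MixedGraph.anc ⟨fun a b => a ∈ dc b ∧ b ≠ i, fun _ _ => False⟩ k

/-- The first step of the iterative procedure defining direct causes. -/
def dcInit : V → Set V := fun k =>
  {i ∈ cause Pdo k | ¬ CI (Pdo i) {i} {k} (cause Pdo k \ {i})}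

/-- One step of the iterative procedure defining direct causes. -/
def dcStep (dc : V → Set V) : V → Set V := fun k =>
  {i ∈ dc k | ¬ CI (Pdo i) {i} {k} (iotaFrom dc i k \ {i})}

/-- The set of direct causes of each node, obtained by iterating the procedure to its
fixed point (reached after at most `|V|²` steps). -/
def dcause [Fintype V] : V → Set V :=
  (dcStep Pdo)^[Fintype.card V * Fintype.card V] (dcInit Pdo)

/-- The set of intervened causes of `k` after intervention on `i`. -/
def iotaCause [Fintype V] (i k : V) : Set V := iotaFrom (dcause Pdo) i k

/-- `ιcause_i(A) = (⋃ k ∈ A, ιcause_i(k)) \ A`. -/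
def iotaCauseSet [Fintype V] (i : V) (A : Set V) : Set V :=
  (⋃ k ∈ A, iotaCause Pdo i k) \ A

/-- The causal structure `S(𝒫_do)`. -/
def Sgraph [Fintype V] : MixedGraph V :=
  ⟨fun a b => a ∈ dcause Pdo b, fun _ _ => False⟩

/-- The `i`-intervened causal structure `S_i(𝒫_do)`. -/
def Sigraph [Fintype V] (i : V) : MixedGraph V :=
  ⟨fun a b => a ∈ dcause Pdo b ∧ b ≠ i, fun _ _ => False⟩

/-- The condition for placing an arc between `j` and `k` in the `i`-intervened graph. -/
def GiArcCond [Fintype V] (i j k : V) : Prop :=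
  j ≠ i ∧ k ≠ i ∧ j ≠ k ∧ j ∉ dcause Pdo k ∧ k ∉ dcause Pdo j ∧
    ¬ CI (Pdo i) {j} {k} (iotaCauseSet Pdo i {j, k})

/-- The `i`-intervened graph `G_i(𝒫_do)`. -/
def Gi [Fintype V] (i : V) : MixedGraph V where
  arrow a b := a ∈ dcause Pdo b ∧ b ≠ i
  arc j k := GiArcCond Pdo i j k ∨ GiArcCond Pdo i k j

/-- The condition for placing an arc between `j` and `k` in the causal graph. -/
def GcArcCond [Fintype V] (j k : V) : Prop :=
  j ≠ k ∧ j ∉ dcause Pdo k ∧ k ∉ dcause Pdo j ∧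
    ∀ i, i ≠ j → i ≠ k → (Gi Pdo i).arc j k

/-- The causal graph `G(𝒫_do)`. -/
def Gcausal [Fintype V] : MixedGraph V where
  arrow a b := a ∈ dcause Pdo b
  arc j k := GcArcCond Pdo j k ∨ GcArcCond Pdo k j

/-- An observable interventional family (Axiom 2). -/
def Observable [Fintype V] (P : Measure (∀ i, X i)) : Prop :=
  (∀ j k : V, SeparablePair (Gcausal Pdo) j k → ∀ i, i ≠ j → i ≠ k →
      CI (Pdo i) {j} {k} (iotaCauseSet Pdo i {j, k}) →
        CI P {j} {k} (causeSet Pdo {j, k})) ∧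
  ∀ k, ∀ i ∈ cause Pdo k,
      CI (Pdo i) {i} {k} (iotaCauseSet Pdo i {i, k}) →
        CI P {i} {k} (causeSet Pdo {i, k})

/-- A strongly observable interventional family (Axioms 2 and 3). -/
def StronglyObservable [Fintype V] (P : Measure (∀ i, X i)) : Prop :=
  Observable Pdo P ∧
  (∀ i j k : V, i ≠ j → i ≠ k → j ≠ k →
      CI P {j} {k} (causeSet Pdo {j, k}) →
        CI (Pdo i) {j} {k} (iotaCauseSet Pdo i {j, k})) ∧
  ∀ k, ∀ i ∈ cause Pdo k,
      CI P {i} {k} (causeSet Pdo {i, k}) →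
        CI (Pdo i) {i} {k} (iotaCauseSet Pdo i {i, k})

/-! ### Quantifiable interventional families -/

/-- `κ` is a regular conditional probability for `P` given the coordinates in `C`. -/
def IsRCP (P : Measure (∀ i, X i)) (C : Set V)
    (κ : Kernel (∀ j : C, X j) (∀ i, X i)) : Prop :=
  IsMarkovKernel κ ∧
    ∀ F : Set (∀ i, X i), MeasurableSet F →
      ∀ S : Set (∀ j : C, X j), MeasurableSet S →
        P (F ∩ C.restrict ⁻¹' S) = ∫⁻ y in S, κ y F ∂(P.map C.restrict)

/-- Two measures are equivalent if they have the same null sets. -/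
def MeasEquiv {α : Type} [MeasurableSpace α] (μ ν : Measure α) : Prop :=
  μ ≪ ν ∧ ν ≪ μ

/-- `{𝒫_do, P}` is compatible: for all distinct `i,k`, the marginal of `P_do(i)` on the
coordinates `cause(k) ∪ {k}` is equivalent to the corresponding marginal of `P`. -/
def Compatible (P : Measure (∀ i, X i)) : Prop :=
  ∀ i k : V, i ≠ k →
    MeasEquiv ((Pdo i).map (insert k (cause Pdo k)).restrict)
      (P.map (insert k (cause Pdo k)).restrict)

/-- A quantifiable interventional family (Axiom 4). -/
def Quantifiable (P : Measure (∀ i, X i)) : Prop :=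
  Compatible Pdo P ∧
    ∀ i k : V, i ≠ k →
      ∃ κ₁ : Kernel (∀ j : (insert i (cause Pdo k) : Set V), X j) (∀ i, X i),
      ∃ κ₂ : Kernel (∀ j : (cause Pdo k : Set V), X j) (∀ i, X i),
        IsRCP (Pdo i) (insert i (cause Pdo k)) κ₁ ∧
        IsRCP P (cause Pdo k) κ₂ ∧
        ∀ x, ((κ₁ x).map fun y => y k) =
          ((κ₂ (Set.restrict₂ (Set.subset_insert i (cause Pdo k)) x)).map fun y => y k)

/-- A bivariate-quantifiable interventional family (Axioms 4 and 5). -/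
def BivQuantifiable (P : Measure (∀ i, X i)) : Prop :=
  Quantifiable Pdo P ∧
    ∀ i j k : V, i ≠ j → i ≠ k → j ≠ k → j ∉ cause Pdo k → k ∉ cause Pdo j →
      ∃ κ₁ : Kernel (∀ l : (insert i (causeSet Pdo {j, k}) : Set V), X l) (∀ i, X i),
      ∃ κ₂ : Kernel (∀ l : (causeSet Pdo {j, k} : Set V), X l) (∀ i, X i),
        IsRCP (Pdo i) (insert i (causeSet Pdo {j, k})) κ₁ ∧
        IsRCP P (causeSet Pdo {j, k}) κ₂ ∧
        ∀ x, ((κ₁ x).map fun y => (y j, y k)) =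
          ((κ₂ (Set.restrict₂ (Set.subset_insert i (causeSet Pdo {j, k})) x)).map
            fun y => (y j, y k))

/-! ### Structural causal models -/

/-- A structural causal model together with its standard single-node interventions. -/
structure SCM (V : Type) (X : V → Type) [∀ i, MeasurableSpace (X i)]
    (Ω : Type) [MeasurableSpace Ω] (E : V → Type) [∀ i, MeasurableSpace (E i)] where
  /-- the associated graph -/
  G : MixedGraph V
  /-- the underlying probability measure -/
  μ : Measure Ω
  prob : IsProbabilityMeasure μ
  /-- the noise variables -/
  ε : ∀ i, Ω → E i
  ε_meas : ∀ i, Measurable (ε i)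
  /-- the structural assignments -/
  φ : ∀ i, (∀ j : (G.pa i : Set V), X j) → E i → X i
  /-- the solution of the system of structural equations -/
  sol : Ω → ∀ i, X i
  sol_meas : Measurable sol
  sol_eq : ∀ ω i, sol ω i = φ i ((G.pa i).restrict (sol ω)) (ε i ω)
  /-- noise vectors on disjoint sets `A`, `B` are independent iff no arc joins `A` and `B` -/
  noise_indep : ∀ A B : Set V, Disjoint A B →
    (IndepFun (fun ω => fun a : A => ε a ω) (fun ω => fun b : B => ε b ω) μ ↔
      ¬ ∃ a ∈ A, ∃ b ∈ B, G.arc a b ∨ G.arc b a)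
  /-- the intervention variables `X̃_i` -/
  tilde : ∀ i, Ω → X i
  tilde_meas : ∀ i, Measurable (tilde i)
  /-- `X̃_i` is distributed as `X_i` -/
  tilde_law : ∀ i, μ.map (tilde i) = μ.map fun ω => sol ω i
  /-- `X̃_i` is independent of all the noises -/
  tilde_indep : ∀ i, IndepFun (tilde i) (fun ω => fun j : V => ε j ω) μ
  /-- the solution of the intervened system of structural equations -/
  isol : ∀ i, Ω → ∀ j, X j
  isol_meas : ∀ i, Measurable (isol i)
  isol_self : ∀ i ω, isol i ω i = tilde i ω
  isol_eq : ∀ i j, j ≠ i → ∀ ω, isol i ω j = φ j ((G.pa j).restrict (isol i ω)) (ε j ω)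

variable {Ω : Type} [MeasurableSpace Ω] {E : V → Type} [∀ i, MeasurableSpace (E i)]

/-- The family of standard-intervention distributions `𝒫_do(𝒞)`. -/
noncomputable def SCM.pdo (M : SCM V X Ω E) : V → Measure (∀ i, X i) :=
  fun i => M.μ.map (M.isol i)

/-- The joint (observational) distribution `P_𝒞` of the SCM. -/
noncomputable def SCM.law (M : SCM V X Ω E) : Measure (∀ i, X i) := M.μ.map M.sol

instance (M : SCM V X Ω E) (i : V) : IsProbabilityMeasure (M.pdo i) := by
  haveI := M.prob
  exact Measure.isProbabilityMeasure_map (M.isol_meas i).aemeasurable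

instance (M : SCM V X Ω E) : IsProbabilityMeasure M.law := by
  haveI := M.prob
  exact Measure.isProbabilityMeasure_map M.sol_meas.aemeasurable

/-- The edge-cause condition: every arrow `i → j` of the SCM graph makes `i` a direct cause
of `j` for the interventional family. -/
def SCM.EdgeCause [Fintype V] (M : SCM V X Ω E) : Prop :=
  ∀ i j, M.G.arrow i j → i ∈ dcause M.pdo j

/-! The argument: conditioning on `C = an({i, j})`, inseparability yields a σ-connecting path
from `i` to `j`. Following the arrows away from any non-collider of this path leads to a
collider or an endpoint, all of which are ancestors of `{i, j}`, so every inner node lies in `C`.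
A non-collider in `C` can only be passed along arrowheads into its own strongly connected
component, which is the PIP condition; non-adjacency of `i` and `j` gives the third node. -/

namespace MixedGraph

variable (G : MixedGraph V)

/-- `A ∪ an(A)`, written with reflexive-transitive reachability. -/
def ancClosure (A : Set V) : Set V := {x | ∃ a ∈ A, Relation.ReflTransGen G.arrow x a}

def IsAncestral (K : Set V) : Prop := ∀ ⦃x y⦄, G.arrow x y → y ∈ K → x ∈ K

variable {G}

theorem mem_sc_comm {x y : V} (h : x ∈ G.sc y) : y ∈ G.sc x := by
  rcases h with rfl | ⟨hyx, hxy⟩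
  · exact Or.inl rfl
  · exact Or.inr ⟨hxy, hyx⟩

theorem subset_ancClosure (A : Set V) : A ⊆ G.ancClosure A :=
  fun a ha => ⟨a, ha, .refl⟩

theorem ancSet_subset_ancClosure (A : Set V) : G.ancSet A ⊆ G.ancClosure A := by
  rintro x ⟨hx, -⟩
  simp only [Set.mem_iUnion] at hx
  obtain ⟨a, ha, -, hxa⟩ := hx
  exact ⟨a, ha, hxa.to_reflTransGen⟩

theorem mem_ancSet_of_mem_ancClosure {A : Set V} {x : V} (hx : x ∈ G.ancClosure A)
    (hxA : x ∉ A) : x ∈ G.ancSet A := by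
  obtain ⟨a, ha, hxa⟩ := hx
  rcases hxa.cases_head with rfl | ⟨y, hxy, hya⟩
  · exact absurd ha hxA
  · refine ⟨Set.mem_biUnion ha ⟨fun h => hxA (h ▸ ha), ?_⟩, hxA⟩
    exact Relation.TransGen.head' hxy hya

theorem union_ancSet_subset_ancClosure (A : Set V) : A ∪ G.ancSet A ⊆ G.ancClosure A :=
  Set.union_subset (subset_ancClosure A) (ancSet_subset_ancClosure A)

theorem ancClosure_subset {A C : Set V} (h : C ⊆ G.ancClosure A) :
    G.ancClosure C ⊆ G.ancClosure A := by
  rintro x ⟨c, hc, hxc⟩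
  obtain ⟨a, ha, hca⟩ := h hc
  exact ⟨a, ha, hxc.trans hca⟩

theorem isAncestral_ancClosure (A : Set V) : G.IsAncestral (G.ancClosure A) := by
  rintro x y hxy ⟨a, ha, hya⟩
  exact ⟨a, ha, .head hxy hya⟩

end MixedGraph

namespace PathIn

variable {G : MixedGraph V} (p : PathIn G)

theorem arrow_of_e_eq_fwd {r : ℕ} (hr : r < p.n) (he : p.e r = .fwd) :
    G.arrow (p.v r) (p.v (r + 1)) := by
  simpa only [he, MixedGraph.IsEdgeDir] using p.edge r hr

theorem arrow_of_e_eq_bwd {r : ℕ} (hr : r < p.n) (he : p.e r = .bwd) :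
    G.arrow (p.v (r + 1)) (p.v r) := by
  simpa only [he, MixedGraph.IsEdgeDir] using p.edge r hr

theorem e_eq_fwd_of_not_headLeft {r : ℕ} (h : ¬ p.headLeft r) : p.e r = .fwd := by
  unfold headLeft at h
  cases he : p.e r <;> simp_all

theorem e_eq_bwd_of_not_headRight {r : ℕ} (h : ¬ p.headRight r) : p.e r = .bwd := by
  unfold headRight at h
  cases he : p.e r <;> simp_all

theorem v_ne_v_zero {r : ℕ} (h1 : 1 ≤ r) (hr : r ≤ p.n) : p.v r ≠ p.v 0 := fun h => by
  have := p.inj r hr 0 (Nat.zero_le _) h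
  omega

theorem v_ne_v_n {r : ℕ} (hr : r < p.n) : p.v r ≠ p.v p.n := fun h => by
  have := p.inj r hr.le p.n le_rfl h
  omega

theorem two_le_n (h : ¬ G.Adj (p.v 0) (p.v p.n)) : 2 ≤ p.n := by
  by_contra! hn
  have hn1 : p.n = 1 := le_antisymm (by omega) p.one_le
  have he := p.edge 0 (by omega)
  rw [hn1] at h
  apply h
  cases h0 : p.e 0 <;> simp only [h0, MixedGraph.IsEdgeDir] at he <;> unfold MixedGraph.Adj <;>
    tauto

section Ancestral

variable {K : Set V} (hK : G.IsAncestral K)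
  (hcol : ∀ r, 1 ≤ r → r < p.n → p.Collider r → p.v r ∈ K)
include hK hcol

/-- Edges following a forward edge stay forward until a collider or the last node. -/
theorem v_succ_mem_of_e_eq_fwd (hn : p.v p.n ∈ K) {r : ℕ} (hr : r < p.n)
    (he : p.e r = .fwd) : p.v (r + 1) ∈ K := by
  induction hk : p.n - (r + 1) generalizing r with
  | zero => rwa [show r + 1 = p.n by omega]
  | succ k ih =>
    have hr1 : r + 1 < p.n := by omega
    by_cases hc : p.Collider (r + 1)
    · exact hcol (r + 1) (by omega) hr1 hc
    have he1 : p.e (r + 1) = .fwd := p.e_eq_fwd_of_not_headLeft fun hl => hc ⟨Or.inl he, hl⟩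
    exact hK (p.arrow_of_e_eq_fwd hr1 he1) (ih hr1 he1 (by omega))

theorem v_mem_of_e_eq_bwd (h0 : p.v 0 ∈ K) {r : ℕ} (hr : r < p.n) (he : p.e r = .bwd) :
    p.v r ∈ K := by
  induction r with
  | zero => exact h0
  | succ r ih =>
    by_cases hc : p.Collider (r + 1)
    · exact hcol (r + 1) (by omega) hr hc
    have he1 : p.e r = .bwd := p.e_eq_bwd_of_not_headRight fun hh => hc ⟨hh, Or.inl he⟩
    exact hK (p.arrow_of_e_eq_bwd (by omega) he1) (ih (by omega) he1)

theorem v_mem_of_colliders_mem (hn : p.v p.n ∈ K) (h0 : p.v 0 ∈ K) {r : ℕ} (hr : r ≤ p.n) :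
    p.v r ∈ K := by
  rcases Nat.eq_zero_or_pos r with rfl | h1
  · exact h0
  rcases hr.eq_or_lt with rfl | hr
  · exact hn
  by_cases hc : p.Collider r
  · exact hcol r h1 hr hc
  by_cases hh : p.headRight (r - 1)
  · have he := p.e_eq_fwd_of_not_headLeft fun hl => hc ⟨hh, hl⟩
    exact hK (p.arrow_of_e_eq_fwd hr he) (p.v_succ_mem_of_e_eq_fwd hK hcol hn hr he)
  · have he := p.e_eq_bwd_of_not_headRight hh
    have harr := p.arrow_of_e_eq_bwd (by omega) he
    rw [Nat.sub_add_cancel h1] at harr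
    exact hK harr (p.v_mem_of_e_eq_bwd hK hcol h0 (by omega) he)

end Ancestral

namespace SigmaConnecting

variable {p} {C : Set V} (hp : p.SigmaConnecting C)
include hp

theorem mem_sc_of_e_eq_fwd {r : ℕ} (h1 : 1 ≤ r) (hr : r < p.n) (he : p.e r = .fwd)
    (hC : p.v r ∈ C) : p.v (r + 1) ∈ G.sc (p.v r) := by
  have hc : ¬ p.Collider r := fun hc => by
    rcases hc.2 with h | h <;> rw [he] at h <;> cases h
  exact ((hp r h1 hr).2 hc).resolve_left (not_not.mpr hC) |>.2 (Or.inl he)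

theorem mem_sc_of_e_eq_bwd {r : ℕ} (hr : r + 1 < p.n) (he : p.e r = .bwd)
    (hC : p.v (r + 1) ∈ C) : p.v r ∈ G.sc (p.v (r + 1)) := by
  have hc : ¬ p.Collider (r + 1) := fun hc => by
    rcases hc.1 with h | h <;> rw [Nat.add_sub_cancel, he] at h <;> cases h
  have := ((hp (r + 1) (by omega) hr).2 hc).resolve_left (not_not.mpr hC) |>.1
  simpa only [Nat.add_sub_cancel] using this (Or.inl he)

end SigmaConnecting

theorem isPIP_of_sigmaConnecting (hadj : ¬ G.Adj (p.v 0) (p.v p.n))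
    (hp : p.SigmaConnecting (G.ancSet {p.v 0, p.v p.n})) : IsPIP G p := by
  set A : Set V := {p.v 0, p.v p.n}
  have hA : A ⊆ G.ancClosure A := G.subset_ancClosure A
  have hinner : ∀ r, 1 ≤ r → r < p.n → p.v r ∈ G.ancSet A := by
    intro r h1 hr
    refine G.mem_ancSet_of_mem_ancClosure ?_ ?_
    · refine p.v_mem_of_colliders_mem (G.isAncestral_ancClosure A) (fun s h1 hs hc => ?_)
        (hA (by simp [A])) (hA (by simp [A])) hr.le
      exact G.ancClosure_subset (G.ancSet_subset_ancClosure A)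
        (G.union_ancSet_subset_ancClosure _ ((hp s h1 hs).1 hc))
    · simp only [A, Set.mem_insert_iff, Set.mem_singleton_iff, not_or]
      exact ⟨p.v_ne_v_zero h1 hr.le, p.v_ne_v_n hr⟩
  refine ⟨p.two_le_n hadj, fun r hr => ?_, hinner⟩
  cases he : p.e r with
  | biarc => exact Or.inl rfl
  | fwd =>
    rcases Nat.eq_zero_or_pos r with rfl | h1
    · exact Or.inr (Or.inr (Or.inl ⟨rfl, rfl⟩))
    · exact Or.inr (Or.inl (MixedGraph.mem_sc_comm (hp.mem_sc_of_e_eq_fwd h1 hr he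
        (hinner r h1 hr))))
  | bwd =>
    by_cases hlast : r + 1 = p.n
    · exact Or.inr (Or.inr (Or.inr ⟨hlast, rfl⟩))
    · exact Or.inr (Or.inl (hp.mem_sc_of_e_eq_bwd (by omega) he (hinner (r + 1) (by omega)
        (by omega))))

end PathIn

section Statements


variable [Fintype V]

theorem stmt2_general {V : Type} (G : MixedGraph V) (i j : V)
    (hnadj : ¬ G.Adj i j)
    (hinsep : ∀ C : Set V, i ∉ C → j ∉ C → ¬ SigmaSep G {i} {j} C) :
    ∃ p : PathIn G, p.v 0 = i ∧ p.v p.n = j ∧ IsPIP G p := by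
  have hsep := hinsep (G.ancSet {i, j}) (fun h => h.2 (by simp)) (fun h => h.2 (by simp))
  obtain ⟨p, hi, hj, hp⟩ := not_not.mp hsep
  obtain rfl : p.v 0 = i := hi
  obtain rfl : p.v p.n = j := hj
  exact ⟨p, rfl, rfl, p.isPIP_of_sigmaConnecting hnadj hp⟩

/-- In a BDMG, every inseparable pair of non-adjacent nodes is connected by a
primitive inducing path. -/
theorem stmt2 {V : Type} (G : MixedGraph V) (hG : G.IsBDMG) (i j : V) (hij : i ≠ j)
    (hnadj : ¬ G.Adj i j)
    (hinsep : ∀ C : Set V, i ∉ C → j ∉ C → ¬ SigmaSep G {i} {j} C) :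
    ∃ p : PathIn G, p.v 0 = i ∧ p.v p.n = j ∧ IsPIP G p :=
  stmt2_general G i j hnadj hinsep

end Statements

end CausalAxioms
end

section
/- Let 𝒫_do = {P_do(i)}_{i∈V} be a quantifiable interventional family with underlying distribution P and directed ancestral causal graph G(𝒫_do). For i ∈ cause(k): i ⊥_{P_do(i)} k | cause(k)\{i} if and only if i ⊥_P k | cause(k)\{i}. -/
open MeasureTheory ProbabilityTheory

namespace CausalAxioms

/-! ### Conditional independence for coordinates of a product space -/

variable {V : Type} {X : V → Type} [∀ i, MeasurableSpace (X i)]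

/-! ### Interventional families -/

variable (Pdo : V → Measure (∀ i, X i))

variable {Ω : Type} [MeasurableSpace Ω] {E : V → Type} [∀ i, MeasurableSpace (E i)]

/-!
When `i ∈ cause(k)`, quantifiability makes the kernel of `P` given `X_{cause(k)}` a common
version `F` of the conditional law of `X_k` given `X_{cause(k)}` under both `P` and `P_do(i)`.
Under a finite measure `Q`, `i ⊥ k | cause(k) \ {i}` holds iff conditioning `X_k` on
`cause(k)` gives the same as conditioning on `cause(k) \ {i}`, i.e. iff `F` agrees `Q`-a.e.
with a `cause(k) \ {i}`-measurable function.
Both functions being `cause(k)`-measurable, this only involves the null sets of the marginal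
of `Q` on `cause(k)`, and these are the same for `P` and `P_do(i)` by compatibility.
-/

section CondExp

variable {α : Type*} {m m₁ mα : MeasurableSpace α} {μ : Measure α}

lemma _root_.IsPiSystem.image2_inter {S T : Set (Set α)} (hS : IsPiSystem S) (hT : IsPiSystem T) :
    IsPiSystem (Set.image2 (· ∩ ·) S T) := by
  rintro _ ⟨s₁, hs₁, t₁, ht₁, rfl⟩ _ ⟨s₂, hs₂, t₂, ht₂, rfl⟩ hne
  obtain ⟨x, ⟨hxs₁, hxt₁⟩, hxs₂, hxt₂⟩ := hne
  exact ⟨s₁ ∩ s₂, hS s₁ hs₁ s₂ hs₂ ⟨x, hxs₁, hxs₂⟩, t₁ ∩ t₂, hT t₁ ht₁ t₂ ht₂ ⟨x, hxt₁, hxt₂⟩,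
    Set.inter_inter_inter_comm s₁ s₂ t₁ t₂⟩

lemma _root_.MeasurableSpace.sup_eq_generateFrom_image2_inter (m₁ m₂ : MeasurableSpace α) :
    m₁ ⊔ m₂ = MeasurableSpace.generateFrom
      (Set.image2 (· ∩ ·) {s | MeasurableSet[m₁] s} {t | MeasurableSet[m₂] t}) := by
  refine le_antisymm (sup_le (fun s hs => ?_) (fun t ht => ?_))
    (MeasurableSpace.generateFrom_le ?_)
  · exact MeasurableSpace.measurableSet_generateFrom ⟨s, hs, Set.univ, .univ, Set.inter_univ s⟩
  · exact MeasurableSpace.measurableSet_generateFrom ⟨Set.univ, .univ, t, ht, Set.univ_inter t⟩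
  · rintro _ ⟨s, hs, t, ht, rfl⟩
    exact (le_sup_left (a := m₁) s hs).inter (le_sup_right (a := m₁) t ht)

lemma setIntegral_eq_of_isPiSystem {S : Set (Set α)} (hm : m ≤ mα)
    (h_eq : m = MeasurableSpace.generateFrom S) (h_inter : IsPiSystem S)
    (h_univ : Set.univ ∈ S) {f g : α → ℝ} (hf : Integrable f μ) (hg : Integrable g μ)
    (basic : ∀ t ∈ S, ∫ x in t, f x ∂μ = ∫ x in t, g x ∂μ) {t : Set α}
    (ht : MeasurableSet[m] t) : ∫ x in t, f x ∂μ = ∫ x in t, g x ∂μ := by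
  induction t, ht using MeasurableSpace.induction_on_inter h_eq h_inter with
  | empty => simp
  | basic t ht => exact basic t ht
  | compl t ht h =>
    have hfg := basic _ h_univ
    rw [Measure.restrict_univ] at hfg
    linarith [integral_add_compl (hm t ht) hf, integral_add_compl (hm t ht) hg]
  | iUnion t hdisj ht h =>
    rw [integral_iUnion (fun n => hm _ (ht n)) hdisj hf.integrableOn,
      integral_iUnion (fun n => hm _ (ht n)) hdisj hg.integrableOn]
    exact tsum_congr h

lemma _root_.Set.indicator_eq_mul_indicator_one {M₀ : Type*} [MulZeroOneClass M₀] (s : Set α)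
    (f : α → M₀) : s.indicator f = f * s.indicator fun _ => 1 := by
  ext x; by_cases hx : x ∈ s <;> simp [hx]

variable [IsFiniteMeasure μ] {s t : Set α}

lemma condExp_indicator_condExp_ae_eq_mul (hs : MeasurableSet s) :
    μ[s.indicator (μ⟦t | m⟧) | m] =ᵐ[μ] μ⟦s | m⟧ * μ⟦t | m⟧ := by
  have hint : Integrable (μ⟦t | m⟧ * s.indicator fun _ => (1 : ℝ)) μ := by
    rw [← Set.indicator_eq_mul_indicator_one]
    exact integrable_condExp.indicator hs
  rw [Set.indicator_eq_mul_indicator_one, mul_comm (μ⟦s | m⟧)]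
  exact condExp_mul_of_stronglyMeasurable_left stronglyMeasurable_condExp hint
    ((integrable_const 1).indicator hs)

lemma condExp_inter_ae_eq_mul_of_condExp_sup_ae_eq (hm : m ≤ mα) (hm₁ : m₁ ≤ mα)
    (ht : MeasurableSet t) (h : μ⟦t | m ⊔ m₁⟧ =ᵐ[μ] μ⟦t | m⟧) (hs : MeasurableSet[m₁] s) :
    μ⟦s ∩ t | m⟧ =ᵐ[μ] μ⟦s | m⟧ * μ⟦t | m⟧ := by
  have hs_sup : MeasurableSet[m ⊔ m₁] s := le_sup_right (a := m) s hs
  calc μ⟦s ∩ t | m⟧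
      = μ[s.indicator (t.indicator fun _ => (1 : ℝ)) | m] := by rw [Set.indicator_indicator]
    _ =ᵐ[μ] μ[μ[s.indicator (t.indicator fun _ => (1 : ℝ)) | m ⊔ m₁] | m] :=
        (condExp_condExp_of_le le_sup_left (sup_le hm hm₁)).symm
    _ =ᵐ[μ] μ[s.indicator (μ⟦t | m⟧) | m] :=
        condExp_congr_ae <| (condExp_indicator ((integrable_const 1).indicator ht) hs_sup).trans
          (h.mono fun x hx => by simp only [Set.indicator, hx])
    _ =ᵐ[μ] μ⟦s | m⟧ * μ⟦t | m⟧ := condExp_indicator_condExp_ae_eq_mul (hm₁ s hs)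

lemma condExp_sup_ae_eq_of_condExp_inter_ae_eq_mul (hm : m ≤ mα) (hm₁ : m₁ ≤ mα)
    (ht : MeasurableSet t)
    (h : ∀ s, MeasurableSet[m₁] s → μ⟦s ∩ t | m⟧ =ᵐ[μ] μ⟦s | m⟧ * μ⟦t | m⟧) :
    μ⟦t | m ⊔ m₁⟧ =ᵐ[μ] μ⟦t | m⟧ := by
  have h1t : Integrable (t.indicator fun _ => (1 : ℝ)) μ := (integrable_const 1).indicator ht
  refine (ae_eq_condExp_of_forall_setIntegral_eq (sup_le hm hm₁) h1t
    (fun _ _ _ => integrable_condExp.integrableOn) (fun v hv _ => ?_)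
    (stronglyMeasurable_condExp.mono (le_sup_left : m ≤ m ⊔ m₁)).aestronglyMeasurable).symm
  refine setIntegral_eq_of_isPiSystem (sup_le hm hm₁)
    (MeasurableSpace.sup_eq_generateFrom_image2_inter m m₁)
    (IsPiSystem.image2_inter (@MeasurableSpace.isPiSystem_measurableSet α m)
      (@MeasurableSpace.isPiSystem_measurableSet α m₁))
    ⟨Set.univ, .univ, Set.univ, .univ, Set.inter_univ _⟩ integrable_condExp h1t ?_ hv
  rintro _ ⟨u, hu, s, hs, rfl⟩
  calc ∫ x in u ∩ s, (μ⟦t | m⟧) x ∂μ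
      = ∫ x in u, s.indicator (μ⟦t | m⟧) x ∂μ := (setIntegral_indicator (hm₁ s hs)).symm
    _ = ∫ x in u, μ[s.indicator (μ⟦t | m⟧) | m] x ∂μ :=
        (setIntegral_condExp hm (integrable_condExp.indicator (hm₁ s hs)) hu).symm
    _ = ∫ x in u, (μ⟦s ∩ t | m⟧) x ∂μ :=
        setIntegral_congr_ae (hm u hu) <|
          ((condExp_indicator_condExp_ae_eq_mul (hm₁ s hs)).trans (h s hs).symm).mono
            fun x hx _ => hx
    _ = ∫ x in u, (s ∩ t).indicator (fun _ => (1 : ℝ)) x ∂μ :=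
        setIntegral_condExp hm ((integrable_const 1).indicator ((hm₁ s hs).inter ht)) hu
    _ = ∫ x in u ∩ s, t.indicator (fun _ => (1 : ℝ)) x ∂μ := by
        rw [← Set.indicator_indicator, setIntegral_indicator (hm₁ s hs)]

lemma condExp_sup_ae_eq_iff (hm : m ≤ mα) (hm₁ : m₁ ≤ mα) (ht : MeasurableSet t) :
    μ⟦t | m ⊔ m₁⟧ =ᵐ[μ] μ⟦t | m⟧ ↔
      ∀ s, MeasurableSet[m₁] s → μ⟦s ∩ t | m⟧ =ᵐ[μ] μ⟦s | m⟧ * μ⟦t | m⟧ :=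
  ⟨fun h _ hs => condExp_inter_ae_eq_mul_of_condExp_sup_ae_eq hm hm₁ ht h hs,
    condExp_sup_ae_eq_of_condExp_inter_ae_eq_mul hm hm₁ ht⟩

lemma condExp_ae_eq_condExp_iff_exists_stronglyMeasurable {m' : MeasurableSpace α}
    (hmm' : m ≤ m') (hm' : m' ≤ mα) {f : α → ℝ} :
    μ[f | m'] =ᵐ[μ] μ[f | m] ↔ ∃ g, StronglyMeasurable[m] g ∧ μ[f | m'] =ᵐ[μ] g := by
  refine ⟨fun h => ⟨_, stronglyMeasurable_condExp, h⟩, fun ⟨g, hg, hfg⟩ => hfg.trans ?_⟩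
  calc g = μ[g | m] :=
        (condExp_of_stronglyMeasurable (hmm'.trans hm') hg (integrable_condExp.congr hfg)).symm
    _ =ᵐ[μ] μ[μ[f | m'] | m] := condExp_congr_ae hfg.symm
    _ =ᵐ[μ] μ[f | m] := condExp_condExp_of_le hmm' hm'

end CondExp

section Trim

variable {α β : Type*} {mα : MeasurableSpace α} {mβ : MeasurableSpace β} {μ ν : Measure α}

lemma absolutelyContinuous_trim_comap {g : α → β} (hg : Measurable g) (h : μ.map g ≪ ν.map g) :
    μ.trim hg.comap_le ≪ ν.trim hg.comap_le := by
  refine Measure.AbsolutelyContinuous.mk fun s hs hνs => ?_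
  rw [trim_measurableSet_eq _ hs] at hνs ⊢
  obtain ⟨s', hs', rfl⟩ := hs
  rw [← Measure.map_apply hg hs'] at hνs ⊢
  exact h hνs

lemma ae_eq_of_absolutelyContinuous_trim {m : MeasurableSpace α} (hm : m ≤ mα)
    (hac : μ.trim hm ≪ ν.trim hm) {f g : α → ℝ} (hf : StronglyMeasurable[m] f)
    (hg : StronglyMeasurable[m] g) (h : f =ᵐ[ν] g) : f =ᵐ[μ] g :=
  ae_eq_of_ae_eq_trim (hac.ae_eq ((hf.ae_eq_trim_iff hm hg).2 h))

lemma measure_eq_of_map_eq {g : α → β} (hg : Measurable g) (h : μ.map g = ν.map g) {s : Set α}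
    (hs : MeasurableSet[mβ.comap g] s) : μ s = ν s := by
  obtain ⟨s', hs', rfl⟩ := hs
  rw [← Measure.map_apply hg hs', h, Measure.map_apply hg hs']

end Trim

section Coordinates

lemma coordσ_eq_biSup (A : Set V) :
    coordσ X A = ⨆ j ∈ A, MeasurableSpace.comap (fun x : ∀ i, X i => x j) inferInstance := by
  rw [coordσ, MeasurableSpace.pi, MeasurableSpace.comap_iSup, iSup_subtype']
  simp only [MeasurableSpace.comap_comp]
  rfl

lemma coordσ_le_pi (A : Set V) : coordσ X A ≤ MeasurableSpace.pi :=
  (Set.measurable_restrict A).comap_le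

lemma coordσ_mono {A B : Set V} (h : A ⊆ B) : coordσ X A ≤ coordσ X B := by
  rw [coordσ_eq_biSup, coordσ_eq_biSup]
  exact biSup_mono h

lemma coordσ_union (A B : Set V) : coordσ X (A ∪ B) = coordσ X A ⊔ coordσ X B := by
  simp only [coordσ_eq_biSup]
  exact iSup_union

lemma coordσ_singleton (k : V) :
    coordσ X {k} = MeasurableSpace.comap (fun x : ∀ i, X i => x k) inferInstance := by
  rw [coordσ_eq_biSup]
  exact iSup_singleton

variable {Q : Measure (∀ i, X i)} [IsFiniteMeasure Q]

lemma IsRCP.condExp_ae_eq {S : Set V} {κ : Kernel (∀ j : S, X j) (∀ i, X i)} (hκ : IsRCP Q S κ)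
    {t : Set (∀ i, X i)} (ht : MeasurableSet t) :
    Q⟦t | coordσ X S⟧ =ᵐ[Q] fun x => (κ (S.restrict x) t).toReal := by
  have := hκ.1
  have hκt : Measurable fun y => (κ y t).toReal := (κ.measurable_coe ht).ennreal_toReal
  have hm : Measurable[coordσ X S] fun x => (κ (S.restrict x) t).toReal :=
    hκt.comp (comap_measurable _)
  have hint : Integrable (fun x => (κ (S.restrict x) t).toReal) Q :=
    .of_bound (hm.mono (coordσ_le_pi S) le_rfl).aestronglyMeasurable 1 <| ae_of_all _ fun x => by
      rw [Real.norm_of_nonneg ENNReal.toReal_nonneg]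
      exact measureReal_le_one
  refine (ae_eq_condExp_of_forall_setIntegral_eq (coordσ_le_pi S)
    ((integrable_const 1).indicator ht) (fun _ _ _ => hint.integrableOn) (fun s hs _ => ?_)
    hm.stronglyMeasurable.aestronglyMeasurable).symm
  obtain ⟨S', hS', rfl⟩ := hs
  calc ∫ x in S.restrict ⁻¹' S', (κ (S.restrict x) t).toReal ∂Q
      = ∫ y in S', (κ y t).toReal ∂(Q.map S.restrict) :=
        (setIntegral_map hS' hκt.aestronglyMeasurable
          (Set.measurable_restrict S).aemeasurable).symm
    _ = (∫⁻ y in S', κ y t ∂(Q.map S.restrict)).toReal :=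
        integral_toReal (κ.measurable_coe ht).aemeasurable (ae_of_all _ fun _ => measure_lt_top _ _)
    _ = ∫ x in S.restrict ⁻¹' S', t.indicator (fun _ => (1 : ℝ)) x ∂Q := by
        rw [← hκ.2 t ht S' hS', setIntegral_indicator ht, setIntegral_const, smul_eq_mul,
          mul_one, Set.inter_comm]
        rfl

lemma CI_iff_condExp_union_ae_eq {A B C : Set V} :
    CI Q A B C ↔ ∀ t, MeasurableSet[coordσ X B] t →
      Q⟦t | coordσ X (C ∪ A)⟧ =ᵐ[Q] Q⟦t | coordσ X C⟧ := by
  simp only [coordσ_union]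
  exact ⟨fun h t ht => (condExp_sup_ae_eq_iff (coordσ_le_pi C) (coordσ_le_pi A)
      (coordσ_le_pi B t ht)).2 fun s hs => h s t hs ht,
    fun h s t hs ht => (condExp_sup_ae_eq_iff (coordσ_le_pi C) (coordσ_le_pi A)
      (coordσ_le_pi B t ht)).1 (h t ht) s hs⟩

lemma CI_iff_forall_exists_ae_eq {A B C : Set V} {F : Set (∀ i, X i) → (∀ i, X i) → ℝ}
    (hF : ∀ t, MeasurableSet[coordσ X B] t → Q⟦t | coordσ X (C ∪ A)⟧ =ᵐ[Q] F t) :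
    CI Q A B C ↔ ∀ t, MeasurableSet[coordσ X B] t →
      ∃ g, StronglyMeasurable[coordσ X C] g ∧ F t =ᵐ[Q] g := by
  rw [CI_iff_condExp_union_ae_eq]
  refine forall₂_congr fun t ht => ?_
  rw [condExp_ae_eq_condExp_iff_exists_stronglyMeasurable
    (coordσ_mono Set.subset_union_left) (coordσ_le_pi _)]
  exact exists_congr fun g => and_congr_right fun _ => ⟨(hF t ht).symm.trans, (hF t ht).trans⟩

lemma map_restrict_absolutelyContinuous_of_subset {Q₁ Q₂ : Measure (∀ i, X i)} {A B : Set V}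
    (hAB : A ⊆ B) (h : Q₁.map B.restrict ≪ Q₂.map B.restrict) :
    Q₁.map A.restrict ≪ Q₂.map A.restrict := by
  have hmap : ∀ Q : Measure (∀ i, X i),
      Q.map A.restrict = (Q.map B.restrict).map (Set.restrict₂ hAB) := fun Q =>
    (Measure.map_map (Set.measurable_restrict₂ hAB) (Set.measurable_restrict B)).symm
  rw [hmap, hmap]
  exact h.map (Set.measurable_restrict₂ hAB)

lemma CI_iff_CI_of_common_version {Q₁ Q₂ : Measure (∀ i, X i)} [IsFiniteMeasure Q₁]
    [IsFiniteMeasure Q₂] {A B C : Set V}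
    (h₁₂ : Q₁.map (C ∪ A).restrict ≪ Q₂.map (C ∪ A).restrict)
    (h₂₁ : Q₂.map (C ∪ A).restrict ≪ Q₁.map (C ∪ A).restrict)
    {F : Set (∀ i, X i) → (∀ i, X i) → ℝ}
    (hF : ∀ t, MeasurableSet[coordσ X B] t → StronglyMeasurable[coordσ X (C ∪ A)] (F t))
    (hF₁ : ∀ t, MeasurableSet[coordσ X B] t → Q₁⟦t | coordσ X (C ∪ A)⟧ =ᵐ[Q₁] F t)
    (hF₂ : ∀ t, MeasurableSet[coordσ X B] t → Q₂⟦t | coordσ X (C ∪ A)⟧ =ᵐ[Q₂] F t) :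
    CI Q₁ A B C ↔ CI Q₂ A B C := by
  have hm : Measurable ((C ∪ A).restrict (π := X)) := Set.measurable_restrict _
  rw [CI_iff_forall_exists_ae_eq hF₁, CI_iff_forall_exists_ae_eq hF₂]
  refine forall₂_congr fun t ht => exists_congr fun g => and_congr_right fun hg => ?_
  have hg' := hg.mono (coordσ_mono (Set.subset_union_left : C ⊆ C ∪ A))
  exact ⟨ae_eq_of_absolutelyContinuous_trim hm.comap_le
      (absolutelyContinuous_trim_comap hm h₂₁) (hF t ht) hg',
    ae_eq_of_absolutelyContinuous_trim hm.comap_le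
      (absolutelyContinuous_trim_comap hm h₁₂) (hF t ht) hg'⟩

end Coordinates

section Quantifiable

variable {Pdo}

lemma Quantifiable.exists_common_condExp_version {P : Measure (∀ i, X i)} [IsFiniteMeasure P]
    (hq : Quantifiable Pdo P) {i k : V} [IsFiniteMeasure (Pdo i)] (hi : i ∈ cause Pdo k) :
    ∃ F : Set (∀ i, X i) → (∀ i, X i) → ℝ,
      (∀ t, MeasurableSet t → StronglyMeasurable[coordσ X (cause Pdo k)] (F t)) ∧
      (∀ t, MeasurableSet t → P⟦t | coordσ X (cause Pdo k)⟧ =ᵐ[P] F t) ∧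
      ∀ t, MeasurableSet[coordσ X {k}] t →
        (Pdo i)⟦t | coordσ X (cause Pdo k)⟧ =ᵐ[Pdo i] F t := by
  obtain ⟨κ₁, κ₂, hκ₁, hκ₂, hκ⟩ := hq.2 i k hi.1
  have := hκ₂.1
  refine ⟨fun t x => (κ₂ ((cause Pdo k).restrict x) t).toReal,
    fun t ht =>
      ((κ₂.measurable_coe ht).ennreal_toReal.comp (comap_measurable _)).stronglyMeasurable,
    fun t ht => hκ₂.condExp_ae_eq ht, fun t ht => ?_⟩
  have hins : coordσ X (insert i (cause Pdo k)) = coordσ X (cause Pdo k) := by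
    rw [Set.insert_eq_of_mem hi]
  rw [← hins]
  refine (hκ₁.condExp_ae_eq (coordσ_le_pi _ t ht)).trans (ae_of_all _ fun x => ?_)
  rw [coordσ_singleton] at ht
  dsimp only
  rw [measure_eq_of_map_eq (measurable_pi_apply k) (hκ _) ht]
  rfl

end Quantifiable

section Statements


variable [Fintype V]

theorem stmt14_general (Pdo : V → Measure (∀ i, X i))
    (hprob : ∀ i, IsProbabilityMeasure (Pdo i))
    (P : Measure (∀ i, X i)) (hP : IsProbabilityMeasure P)
    (hq : Quantifiable Pdo P)
    (k i : V) (hi : i ∈ cause Pdo k) :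
    CI (Pdo i) {i} {k} (cause Pdo k \ {i}) ↔ CI P {i} {k} (cause Pdo k \ {i}) := by
  have := hprob i
  obtain ⟨F, hF, hFP, hFdo⟩ := hq.exists_common_condExp_version hi
  have hD : cause Pdo k \ {i} ∪ {i} = cause Pdo k :=
    Set.diff_union_of_subset (Set.singleton_subset_iff.2 hi)
  have hmarg := hq.1 i k hi.1
  refine CI_iff_CI_of_common_version (F := F) ?_ ?_ ?_ ?_ ?_ <;> rw [hD]
  · exact map_restrict_absolutelyContinuous_of_subset (Set.subset_insert _ _) hmarg.1
  · exact map_restrict_absolutelyContinuous_of_subset (Set.subset_insert _ _) hmarg.2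
  · exact fun t ht => hF t (coordσ_le_pi _ t ht)
  · exact hFdo
  · exact fun t ht => hFP t (coordσ_le_pi _ t ht)

/-- For a quantifiable interventional family with underlying distribution `P`
and directed ancestral causal graph, for `i ∈ cause(k)`:
`i ⊥_{P_do(i)} k | cause(k)\{i}` iff `i ⊥_P k | cause(k)\{i}`. -/
theorem stmt14 (Pdo : V → Measure (∀ i, X i))
    (hprob : ∀ i, IsProbabilityMeasure (Pdo i))
    (P : Measure (∀ i, X i)) (hP : IsProbabilityMeasure P)
    (hq : Quantifiable Pdo P) (hanc : (Gcausal Pdo).DirectedAncestral)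
    (k i : V) (hi : i ∈ cause Pdo k) :
    CI (Pdo i) {i} {k} (cause Pdo k \ {i}) ↔ CI P {i} {k} (cause Pdo k \ {i}) :=
  stmt14_general Pdo hprob P hP hq k i hi

end Statements

end CausalAxioms
end
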